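/- (q-analog of the Itô isometry.) Let 0<q<1, t>0, and let f(x,s) = ∑_{m=0}^d (b_m(s)/[m]_q!)·h_m(x;s), where each b_m:[0,∞)→ℝ is bounded on [0,t]. Under the q-Brownian hypotheses on (B_s), the series J_m := ∑_{k=0}^∞ b_m(q^k t)·(h_{m+1}(B_{q^k t}; q^k t) − h_{m+1}(B_{q^{k+1} t}; q^{k+1} t)) converges almost surely and in L²(P) for each 0≤m≤d, and the random variable I := ∑_{m=0}^d (1/[m+1]_q!)·J_m satisfies E[I²] = (1−q)·t·∑_{k=0}^∞ q^k·E[f(B_{q^k t}, q^k t)²], i.e. E[(∫_0^t f(B_s,s) d̶B^{(q)})²] = ∫_0^t E[f(B_s,s)²] d_q s, where the right-hand side is the Jackson q-integral and equals ∑_{m=0}^d (1/[m]_q!)·∫_0^t b_m(s)²·s^m d_q s. -/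

import Mathlib

/-!
By the martingale property and the orthogonality of the `h_n(B_s; s)`,
`E[h_n(B_u;u) h_m(B_s;s)] = δ_{mn} [n]_q! min(s,u)^n`. At the times `τ_k = q^k t` this covariance
depends only on `max k j`, so the increments `h_{m+1}(B_{τ_k}) - h_{m+1}(B_{τ_{k+1}})` are
orthogonal in `L²`, with variance `[m+1]_q! (τ_k^{m+1} - τ_{k+1}^{m+1})`. As `τ_{k+1} = q τ_k` and
`1 - q^{m+1} = (1-q) [m+1]_q`, Pythagoras turns `E[I_N²]`, for the series truncated after `N`
terms, into the first `N` terms of the Jackson sum `(1-q) t ∑_k q^k E[f(B_{τ_k}, τ_k)²]`.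
The bound `|B_s| ≤ 2√s/√(1-q)` gives `|h_n(B_s;s)| ≤ K s^{n/2}`, so the terms of `J_m` decay like
`q^{k/2}`: the series converge uniformly almost surely, and dominated convergence passes the
identity to the limit.
-/

open MeasureTheory Filter

/-- `[n]_q = 1 + q + ⋯ + q^{n-1}`. -/
noncomputable def qNat (q : ℝ) (n : ℕ) : ℝ := ∑ i ∈ Finset.range n, q ^ i

/-- `[n]_q! = [1]_q [2]_q ⋯ [n]_q`. -/
noncomputable def qFact (q : ℝ) (n : ℕ) : ℝ := ∏ i ∈ Finset.range n, qNat q (i + 1)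

/-- Monic continuous q-Hermite polynomials: `h_0 = 1`, `h_1 = x`,
`x·h_n(x;t) = h_{n+1}(x;t) + t·[n]_q·h_{n−1}(x;t)`. -/
noncomputable def qH (q : ℝ) : ℕ → ℝ → ℝ → ℝ
  | 0, _, _ => 1
  | 1, x, _ => x
  | (n + 2), x, t => x * qH q (n + 1) x t - t * qNat q (n + 1) * qH q n x t

open Finset Topology
open scoped ENNReal

lemma qNat_succ_pos {q : ℝ} (hq : 0 ≤ q) (n : ℕ) : 0 < qNat q (n + 1) := by
  rw [qNat, sum_range_succ']
  exact add_pos_of_nonneg_of_pos (sum_nonneg fun i _ => pow_nonneg hq _) (by simp)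

lemma qFact_pos {q : ℝ} (hq : 0 ≤ q) (n : ℕ) : 0 < qFact q n :=
  prod_pos fun i _ => qNat_succ_pos hq i

lemma qFact_succ (q : ℝ) (n : ℕ) : qFact q (n + 1) = qFact q n * qNat q (n + 1) :=
  prod_range_succ _ n

lemma one_sub_mul_qNat (q : ℝ) (n : ℕ) : (1 - q) * qNat q n = 1 - q ^ n := by
  rw [qNat, ← neg_sub, neg_mul, mul_comm, geom_sum_mul, neg_sub]

lemma sub_pow_succ_div_qFact_succ {q : ℝ} (hq : 0 ≤ q) (s : ℝ) (m : ℕ) :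
    (s ^ (m + 1) - (q * s) ^ (m + 1)) / qFact q (m + 1) =
      (1 - q) * s * (s ^ m / qFact q m) := by
  have hF := (qFact_pos hq m).ne'
  have hN := (qNat_succ_pos hq m).ne'
  rw [qFact_succ, mul_pow]
  field_simp
  linear_combination (-s ^ (m + 1)) * one_sub_mul_qNat q (m + 1)

lemma continuous_qH (q u : ℝ) (n : ℕ) : Continuous fun x => qH q n x u := by
  induction n using Nat.twoStepInduction with
  | zero => exact continuous_const
  | one => exact continuous_id
  | more n h₀ h₁ => exact (continuous_id.mul h₁).sub (continuous_const.mul h₀)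

lemma exists_abs_qH_le (q : ℝ) {a : ℝ} (ha : 0 ≤ a) (n : ℕ) :
    ∃ K, 0 ≤ K ∧ ∀ u x : ℝ, 0 ≤ u → |x| ≤ a * √u → |qH q n x u| ≤ K * √u ^ n := by
  induction n using Nat.twoStepInduction with
  | zero => exact ⟨1, zero_le_one, fun u x _ _ => by simp [qH]⟩
  | one => exact ⟨a, ha, fun u x _ hx => by simpa [qH] using hx⟩
  | more n ih₀ ih₁ =>
    obtain ⟨K₀, hK₀, h₀⟩ := ih₀
    obtain ⟨K₁, hK₁, h₁⟩ := ih₁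
    refine ⟨a * K₁ + |qNat q (n + 1)| * K₀, by positivity, fun u x hu hx => ?_⟩
    calc |qH q (n + 2) x u|
        = |x * qH q (n + 1) x u - u * qNat q (n + 1) * qH q n x u| := rfl
      _ ≤ |x| * |qH q (n + 1) x u| + u * |qNat q (n + 1)| * |qH q n x u| := by
        refine (abs_sub _ _).trans_eq ?_
        rw [abs_mul, abs_mul, abs_mul, abs_of_nonneg hu]
      _ ≤ a * √u * (K₁ * √u ^ (n + 1)) +
            u * |qNat q (n + 1)| * (K₀ * √u ^ n) := by
        gcongr
        exacts [h₁ u x hu hx, h₀ u x hu hx]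
      _ = (a * K₁ + |qNat q (n + 1)| * K₀) * √u ^ (n + 2) := by
        linear_combination (|qNat q (n + 1)| * K₀ * √u ^ n) * (Real.sq_sqrt hu).symm

lemma sqrt_pow_mul_pow_le {q : ℝ} (hq₀ : 0 ≤ q) (hq₁ : q ≤ 1) (t : ℝ) (k : ℕ) {n : ℕ}
    (hn : n ≠ 0) : √(q ^ k * t) ^ n ≤ √t ^ n * √q ^ k := by
  have hsqrt : √(q ^ k) = √q ^ k := by
    rw [Real.sqrt_eq_iff_eq_sq (pow_nonneg hq₀ k) (pow_nonneg (Real.sqrt_nonneg q) k),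
      ← pow_mul, mul_comm, pow_mul, Real.sq_sqrt hq₀]
  rw [Real.sqrt_mul (pow_nonneg hq₀ k), hsqrt, mul_pow, mul_comm]
  gcongr
  exact pow_le_of_le_one (by positivity)
    (pow_le_one₀ (Real.sqrt_nonneg q) (Real.sqrt_le_one.mpr hq₁)) hn

lemma abs_sum_range_le_of_abs_le_geometric {a : ℕ → ℝ} {C r : ℝ} (hr₀ : 0 ≤ r) (hr₁ : r < 1)
    (ha : ∀ k, |a k| ≤ C * r ^ k) (N : ℕ) : |∑ k ∈ range N, a k| ≤ C / (1 - r) := by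
  have hC : 0 ≤ C := by simpa using (abs_nonneg _).trans (ha 0)
  calc |∑ k ∈ range N, a k| ≤ ∑ k ∈ range N, C * r ^ k :=
        (abs_sum_le_sum_abs _ _).trans (sum_le_sum fun k _ => ha k)
    _ = C * ∑ k ∈ Ico 0 N, r ^ k := by rw [mul_sum, range_eq_Ico]
    _ ≤ C * (r ^ 0 / (1 - r)) := by gcongr; exact geom_sum_Ico_le_of_lt_one hr₀ hr₁
    _ = C / (1 - r) := by ring

lemma abs_tsum_le_of_abs_le_geometric {a : ℕ → ℝ} {C r : ℝ} (hr₀ : 0 ≤ r) (hr₁ : r < 1)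
    (ha : ∀ k, |a k| ≤ C * r ^ k) : |∑' k, a k| ≤ C / (1 - r) := by
  simpa [div_eq_mul_inv] using
    tsum_of_norm_bounded (f := a) ((hasSum_geometric_of_lt_one hr₀ hr₁).mul_left C) ha

section RandomVariables

variable {Ω : Type*} [MeasurableSpace Ω] {μ : Measure Ω}

lemma integral_sq_sum_mul_of_orthogonal {ι : Type*} [DecidableEq ι] (s : Finset ι)
    (c : ι → ℝ) (Y : ι → Ω → ℝ) (v : ι → ℝ)
    (hint : ∀ i ∈ s, ∀ j ∈ s, Integrable (fun ω => Y i ω * Y j ω) μ)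
    (hcov : ∀ i ∈ s, ∀ j ∈ s, ∫ ω, Y i ω * Y j ω ∂μ = if i = j then v i else 0) :
    ∫ ω, (∑ i ∈ s, c i * Y i ω) ^ 2 ∂μ = ∑ i ∈ s, c i ^ 2 * v i := by
  have hexpand : ∀ ω, (∑ i ∈ s, c i * Y i ω) ^ 2 =
      ∑ i ∈ s, ∑ j ∈ s, c i * c j * (Y i ω * Y j ω) := fun ω => by
    rw [sq, sum_mul_sum]
    exact sum_congr rfl fun i _ => sum_congr rfl fun j _ => by ring
  simp_rw [hexpand]
  rw [integral_finsetSum _ fun i hi =>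
    integrable_finsetSum _ fun j hj => (hint i hi j hj).const_mul _]
  refine sum_congr rfl fun i hi => ?_
  rw [integral_finsetSum _ fun j hj => (hint i hi j hj).const_mul _]
  simp_rw [integral_const_mul]
  rw [sum_eq_single_of_mem i hi fun j hj hji => by
      rw [hcov i hi j hj, if_neg hji.symm, mul_zero],
    hcov i hi i hi, if_pos rfl, sq]

lemma integral_sub_mul_sub_of_integral_mul_eq_max {X Y : ℕ → Ω → ℝ} {G : ℕ → ℝ}
    (hint : ∀ i j, Integrable (fun ω => X i ω * Y j ω) μ)
    (hcov : ∀ i j, ∫ ω, X i ω * Y j ω ∂μ = G (max i j)) (k j : ℕ) :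
    ∫ ω, (X k ω - X (k + 1) ω) * (Y j ω - Y (j + 1) ω) ∂μ =
      if k = j then G k - G (k + 1) else 0 := by
  have hexpand : ∀ ω, (X k ω - X (k + 1) ω) * (Y j ω - Y (j + 1) ω) =
      (X k ω * Y j ω - X k ω * Y (j + 1) ω) -
        (X (k + 1) ω * Y j ω - X (k + 1) ω * Y (j + 1) ω) := fun ω => by ring
  simp_rw [hexpand]
  rw [integral_sub (f := fun ω => X k ω * Y j ω - X k ω * Y (j + 1) ω)
      (g := fun ω => X (k + 1) ω * Y j ω - X (k + 1) ω * Y (j + 1) ω)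
      ((hint _ _).sub (hint _ _)) ((hint _ _).sub (hint _ _)),
    integral_sub (hint _ _) (hint _ _), integral_sub (hint _ _) (hint _ _)]
  simp only [hcov]
  rcases lt_trichotomy k j with h | rfl | h
  · rw [if_neg h.ne, show max k j = j by omega, show max k (j + 1) = j + 1 by omega,
      show max (k + 1) j = j by omega, show max (k + 1) (j + 1) = j + 1 by omega]
    ring
  · rw [if_pos rfl, max_self, max_self, show max k (k + 1) = k + 1 by omega,
      show max (k + 1) k = k + 1 by omega]
    ring
  · rw [if_neg h.ne', show max k j = k by omega, show max k (j + 1) = k by omega,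
      show max (k + 1) j = k + 1 by omega, show max (k + 1) (j + 1) = k + 1 by omega]
    ring

lemma ae_tendsto_sum_range_tsum {a : ℕ → Ω → ℝ} {C r : ℝ} (hr₀ : 0 ≤ r) (hr₁ : r < 1)
    (ha : ∀ᵐ ω ∂μ, ∀ k, |a k ω| ≤ C * r ^ k) :
    ∀ᵐ ω ∂μ, Tendsto (fun N => ∑ k ∈ range N, a k ω) atTop (𝓝 (∑' k, a k ω)) :=
  ha.mono fun _ h => (Summable.of_norm_bounded
    ((summable_geometric_of_lt_one hr₀ hr₁).mul_left C) h).hasSum.tendsto_sum_nat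

variable [IsFiniteMeasure μ]

lemma tendsto_integral_sq_of_ae_tendsto {X : ℕ → Ω → ℝ} {Y : Ω → ℝ} {C : ℝ}
    (hX : ∀ N, AEStronglyMeasurable (X N) μ) (hC : ∀ N, ∀ᵐ ω ∂μ, |X N ω| ≤ C)
    (hlim : ∀ᵐ ω ∂μ, Tendsto (X · ω) atTop (𝓝 (Y ω))) :
    Tendsto (fun N => ∫ ω, X N ω ^ 2 ∂μ) atTop (𝓝 (∫ ω, Y ω ^ 2 ∂μ)) :=
  tendsto_integral_of_dominated_convergence (fun _ => C ^ 2) (fun N => (hX N).pow 2)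
    (integrable_const _)
    (fun N => (hC N).mono fun ω h => by
      rw [Real.norm_eq_abs, abs_pow]
      exact pow_le_pow_left₀ (abs_nonneg _) h 2)
    (hlim.mono fun ω h => h.pow 2)

lemma tendsto_integral_sq_sum_range_sub_tsum {a : ℕ → Ω → ℝ} {C r : ℝ}
    (hmeas : ∀ k, Measurable (a k))
    (hr₀ : 0 ≤ r) (hr₁ : r < 1) (ha : ∀ᵐ ω ∂μ, ∀ k, |a k ω| ≤ C * r ^ k) :
    Tendsto (fun N => ∫ ω, (∑ k ∈ range N, a k ω - ∑' k, a k ω) ^ 2 ∂μ) atTop (𝓝 0) := by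
  have h := tendsto_integral_sq_of_ae_tendsto (μ := μ) (Y := 0) (C := 2 * (C / (1 - r)))
    (fun N => ((Finset.measurable_sum _ fun k _ => hmeas k).sub
      (Measurable.tsum hmeas)).aestronglyMeasurable)
    (fun N => ha.mono fun _ h => ((abs_sub _ _).trans
      (add_le_add (abs_sum_range_le_of_abs_le_geometric hr₀ hr₁ h N)
        (abs_tsum_le_of_abs_le_geometric hr₀ hr₁ h))).trans_eq (two_mul _).symm)
    ((ae_tendsto_sum_range_tsum hr₀ hr₁ ha).mono fun ω h => by
      simpa using h.sub_const (∑' k, a k ω))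
  simpa using h

lemma tendsto_integral_sq_sum_mul_sum_range {ι : Type*} (s : Finset ι) (c : ι → ℝ)
    {a : ι → ℕ → Ω → ℝ} {C : ι → ℝ} {r : ℝ} (hmeas : ∀ i k, Measurable (a i k))
    (hr₀ : 0 ≤ r) (hr₁ : r < 1) (ha : ∀ i ∈ s, ∀ᵐ ω ∂μ, ∀ k, |a i k ω| ≤ C i * r ^ k) :
    Tendsto (fun N => ∫ ω, (∑ i ∈ s, c i * ∑ k ∈ range N, a i k ω) ^ 2 ∂μ) atTop
      (𝓝 (∫ ω, (∑ i ∈ s, c i * ∑' k, a i k ω) ^ 2 ∂μ)) := by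
  refine tendsto_integral_sq_of_ae_tendsto (C := ∑ i ∈ s, |c i| * (C i / (1 - r)))
    (fun N => (Finset.measurable_sum s fun i _ => measurable_const.mul
      (Finset.measurable_sum _ fun k _ => hmeas i k)).aestronglyMeasurable)
    (fun N => ((eventually_all_finset s).mpr ha).mono fun ω h => ?_) ?_
  · refine (abs_sum_le_sum_abs _ _).trans (sum_le_sum fun i hi => ?_)
    rw [abs_mul]
    exact mul_le_mul_of_nonneg_left
      (abs_sum_range_le_of_abs_le_geometric hr₀ hr₁ (h i hi) N) (abs_nonneg _)
  · filter_upwards [(eventually_all_finset s).mpr fun i hi =>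
      ae_tendsto_sum_range_tsum hr₀ hr₁ (ha i hi)] with ω h
    exact tendsto_finsetSum s fun i hi => (h i hi).const_mul (c i)

end RandomVariables

structure IsQBrownian {Ω : Type*} [m0 : MeasurableSpace Ω] (μ : Measure Ω)
    (ℱ : Filtration ℝ m0) (q : ℝ) (B : ℝ → Ω → ℝ) : Prop where
  adapted : Adapted ℱ B
  ae_abs_le : ∀ s : ℝ, 0 ≤ s → ∀ᵐ ω ∂μ, |B s ω| ≤ 2 * √s / √(1 - q)
  condExp_qH : ∀ (n : ℕ) (s u : ℝ), 0 ≤ s → s ≤ u →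
    μ[fun ω => qH q n (B u ω) u | ℱ s] =ᵐ[μ] fun ω => qH q n (B s ω) s
  integral_qH_mul_qH : ∀ s : ℝ, 0 < s → ∀ m n : ℕ,
    ∫ ω, qH q n (B s ω) s * qH q m (B s ω) s ∂μ = if m = n then qFact q n * s ^ n else 0

/-- The `k`-th term of the series `J_m`. -/
noncomputable def qItoTerm {Ω : Type*} (q t : ℝ) (B : ℝ → Ω → ℝ) (b : ℕ → ℝ → ℝ) (m k : ℕ)
    (ω : Ω) : ℝ :=
  b m (q ^ k * t) * (qH q (m + 1) (B (q ^ k * t) ω) (q ^ k * t) -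
    qH q (m + 1) (B (q ^ (k + 1) * t) ω) (q ^ (k + 1) * t))

/-- `f(B_s, s)` for the integrand `f(x, s) = ∑_{m ≤ d} (b_m(s) / [m]_q!) h_m(x; s)`. -/
noncomputable def qIntegrand {Ω : Type*} (q : ℝ) (B : ℝ → Ω → ℝ) (b : ℕ → ℝ → ℝ) (d : ℕ)
    (s : ℝ) (ω : Ω) : ℝ :=
  ∑ m ∈ range (d + 1), b m s / qFact q m * qH q m (B s ω) s

namespace IsQBrownian

variable {Ω : Type*} [m0 : MeasurableSpace Ω] {μ : Measure Ω} {ℱ : Filtration ℝ m0}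
  {q t : ℝ} {B : ℝ → Ω → ℝ}

lemma measurable_qH (hB : IsQBrownian μ ℱ q B) (n : ℕ) (s : ℝ) :
    Measurable fun ω => qH q n (B s ω) s :=
  (continuous_qH q s n).measurable.comp ((hB.adapted s).mono (ℱ.le s) le_rfl)

lemma measurable_qItoTerm (hB : IsQBrownian μ ℱ q B) (b : ℕ → ℝ → ℝ) (m k : ℕ) :
    Measurable (qItoTerm q t B b m k) :=
  measurable_const.mul ((hB.measurable_qH _ _).sub (hB.measurable_qH _ _))

lemma exists_ae_abs_qH_le (hB : IsQBrownian μ ℱ q B) (n : ℕ) :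
    ∃ K, 0 ≤ K ∧ ∀ s, 0 ≤ s → ∀ᵐ ω ∂μ, |qH q n (B s ω) s| ≤ K * √s ^ n := by
  obtain ⟨K, hK₀, hK⟩ := exists_abs_qH_le q (a := 2 / √(1 - q)) (by positivity) n
  refine ⟨K, hK₀, fun s hs => (hB.ae_abs_le s hs).mono fun ω hω => hK s _ hs ?_⟩
  rwa [div_mul_eq_mul_div]

lemma memLp_qH (hB : IsQBrownian μ ℱ q B) {s : ℝ} (hs : 0 ≤ s) (n : ℕ) :
    MemLp (fun ω => qH q n (B s ω) s) ∞ μ := by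
  obtain ⟨K, -, hK⟩ := hB.exists_ae_abs_qH_le n
  exact memLp_top_of_bound (hB.measurable_qH n s).aestronglyMeasurable _ (hK s hs)

lemma exists_ae_abs_qItoTerm_le (hB : IsQBrownian μ ℱ q B) (hq₀ : 0 ≤ q) (hq₁ : q ≤ 1)
    (ht : 0 ≤ t) {b : ℕ → ℝ → ℝ} {m : ℕ} {M : ℝ} (hb : ∀ k, |b m (q ^ k * t)| ≤ M) :
    ∃ C, ∀ᵐ ω ∂μ, ∀ k, |qItoTerm q t B b m k ω| ≤ C * √q ^ k := by
  obtain ⟨K, hK₀, hK⟩ := hB.exists_ae_abs_qH_le (m + 1)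
  have hM₀ : 0 ≤ M := (abs_nonneg _).trans (hb 0)
  set L := K * √t ^ (m + 1)
  refine ⟨M * (2 * L), ?_⟩
  filter_upwards [ae_all_iff.mpr fun k => hK (q ^ k * t) (by positivity)] with ω hω k
  have hH : ∀ j, |qH q (m + 1) (B (q ^ j * t) ω) (q ^ j * t)| ≤ L * √q ^ j := fun j =>
    (hω j).trans <| by
      rw [mul_assoc]
      exact mul_le_mul_of_nonneg_left (sqrt_pow_mul_pow_le hq₀ hq₁ t j m.succ_ne_zero) hK₀
  have hr : √q ^ (k + 1) ≤ √q ^ k :=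
    pow_le_pow_of_le_one (Real.sqrt_nonneg q) (Real.sqrt_le_one.mpr hq₁) k.le_succ
  calc |qItoTerm q t B b m k ω| ≤ M * (L * √q ^ k + L * √q ^ (k + 1)) := by
        rw [qItoTerm, abs_mul]
        exact mul_le_mul (hb k) ((abs_sub _ _).trans (add_le_add (hH k) (hH (k + 1))))
          (abs_nonneg _) hM₀
    _ ≤ M * (L * √q ^ k + L * √q ^ k) := by gcongr
    _ = M * (2 * L) * √q ^ k := by ring

lemma memLp_qItoTerm (hB : IsQBrownian μ ℱ q B) (hq₀ : 0 ≤ q) (ht : 0 ≤ t)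
    (b : ℕ → ℝ → ℝ) (m k : ℕ) : MemLp (qItoTerm q t B b m k) ∞ μ :=
  ((hB.memLp_qH (by positivity) _).sub (hB.memLp_qH (by positivity) _)).const_mul _

variable [IsFiniteMeasure μ]

lemma integrable_qH_mul_qH (hB : IsQBrownian μ ℱ q B) {s u : ℝ} (hu : 0 ≤ u) (hs : 0 ≤ s)
    (n m : ℕ) : Integrable (fun ω => qH q n (B u ω) u * qH q m (B s ω) s) μ :=
  ((hB.memLp_qH hu n).integrable le_top).mul_of_top_left (hB.memLp_qH hs m)

lemma integral_qH_mul_qH_of_le (hB : IsQBrownian μ ℱ q B) {s u : ℝ} (hs : 0 < s)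
    (hsu : s ≤ u) (n m : ℕ) :
    ∫ ω, qH q n (B u ω) u * qH q m (B s ω) s ∂μ = if m = n then qFact q n * s ^ n else 0 := by
  have hu : 0 ≤ u := hs.le.trans hsu
  have hpull := condExp_mul_of_stronglyMeasurable_left
    ((continuous_qH q s m).measurable.comp (hB.adapted s)).stronglyMeasurable
    (hB.integrable_qH_mul_qH hs.le hu m n) ((hB.memLp_qH hu n).integrable le_top) (m := ℱ s)
  calc ∫ ω, qH q n (B u ω) u * qH q m (B s ω) s ∂μ
      = ∫ ω, qH q m (B s ω) s * qH q n (B u ω) u ∂μ := by simp_rw [mul_comm]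
    _ = ∫ ω, qH q n (B s ω) s * qH q m (B s ω) s ∂μ := by
      rw [← integral_condExp (ℱ.le s)]
      refine integral_congr_ae ?_
      filter_upwards [hpull, hB.condExp_qH n s u hs.le hsu] with ω h₁ h₂
      exact h₁.trans (by rw [Pi.mul_apply, h₂, mul_comm, Function.comp_apply])
    _ = if m = n then qFact q n * s ^ n else 0 := hB.integral_qH_mul_qH s hs m n

lemma integral_qH_mul_qH_eq_min (hB : IsQBrownian μ ℱ q B) {s u : ℝ} (hs : 0 < s)
    (hu : 0 < u) (n m : ℕ) :
    ∫ ω, qH q n (B u ω) u * qH q m (B s ω) s ∂μ =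
      if m = n then qFact q n * min s u ^ n else 0 := by
  rcases le_total s u with h | h
  · rw [min_eq_left h, hB.integral_qH_mul_qH_of_le hs h]
  · simp_rw [mul_comm (qH q n _ _)]
    rw [min_eq_right h, hB.integral_qH_mul_qH_of_le hu h]
    rcases eq_or_ne m n with rfl | hmn
    · simp
    · simp [hmn, hmn.symm]

lemma integral_qItoTerm_mul_qItoTerm (hB : IsQBrownian μ ℱ q B) (hq₀ : 0 < q) (hq₁ : q ≤ 1)
    (ht : 0 < t) (b : ℕ → ℝ → ℝ) (m k n j : ℕ) :
    ∫ ω, qItoTerm q t B b m k ω * qItoTerm q t B b n j ω ∂μ =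
      if (m, k) = (n, j) then
        b m (q ^ k * t) ^ 2 *
          (qFact q (m + 1) * ((q ^ k * t) ^ (m + 1) - (q ^ (k + 1) * t) ^ (m + 1)))
      else 0 := by
  have hτ : ∀ i, 0 < q ^ i * t := fun i => by positivity
  have hmin : ∀ i j, min (q ^ j * t) (q ^ i * t) = q ^ max i j * t := fun i j => by
    have hanti : Antitone fun i : ℕ => q ^ i * t := fun i j hij =>
      mul_le_mul_of_nonneg_right (pow_le_pow_of_le_one hq₀.le hq₁ hij) ht.le
    rw [max_comm]
    exact hanti.map_max.symm
  have hincr := integral_sub_mul_sub_of_integral_mul_eq_max (μ := μ)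
    (X := fun i ω => qH q (m + 1) (B (q ^ i * t) ω) (q ^ i * t))
    (Y := fun i ω => qH q (n + 1) (B (q ^ i * t) ω) (q ^ i * t))
    (G := fun i => if m = n then qFact q (m + 1) * (q ^ i * t) ^ (m + 1) else 0)
    (fun i j => hB.integrable_qH_mul_qH (hτ i).le (hτ j).le _ _)
    (fun i j => by
      rw [hB.integral_qH_mul_qH_eq_min (hτ j) (hτ i), hmin]
      rcases eq_or_ne m n with rfl | hmn
      · simp
      · simp [hmn, hmn.symm]) k j
  have hprod : ∀ ω, qItoTerm q t B b m k ω * qItoTerm q t B b n j ω =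
      b m (q ^ k * t) * b n (q ^ j * t) *
        ((qH q (m + 1) (B (q ^ k * t) ω) (q ^ k * t) -
            qH q (m + 1) (B (q ^ (k + 1) * t) ω) (q ^ (k + 1) * t)) *
          (qH q (n + 1) (B (q ^ j * t) ω) (q ^ j * t) -
            qH q (n + 1) (B (q ^ (j + 1) * t) ω) (q ^ (j + 1) * t))) := fun ω => by
    rw [qItoTerm, qItoTerm]
    ring
  simp_rw [hprod]
  rw [integral_const_mul, hincr]
  rcases eq_or_ne m n with rfl | hmn
  · rcases eq_or_ne k j with rfl | hkj
    · simp only [if_true]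
      ring
    · simp [hkj]
  · simp [hmn]

lemma integral_qIntegrand_sq (hB : IsQBrownian μ ℱ q B) (hq : 0 ≤ q) (b : ℕ → ℝ → ℝ)
    (d : ℕ) {s : ℝ} (hs : 0 < s) :
    ∫ ω, qIntegrand q B b d s ω ^ 2 ∂μ =
      ∑ m ∈ range (d + 1), b m s ^ 2 / qFact q m * s ^ m := by
  unfold qIntegrand
  rw [integral_sq_sum_mul_of_orthogonal _ _ (fun m ω => qH q m (B s ω) s)
    (fun m => qFact q m * s ^ m) (fun i _ j _ => hB.integrable_qH_mul_qH hs.le hs.le i j)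
    (fun i _ j _ => (hB.integral_qH_mul_qH s hs j i).trans (if_congr eq_comm rfl rfl))]
  refine sum_congr rfl fun m _ => ?_
  field_simp [(qFact_pos hq m).ne']

lemma integral_sq_sum_qItoTerm (hB : IsQBrownian μ ℱ q B) (hq₀ : 0 < q) (hq₁ : q ≤ 1)
    (ht : 0 < t) (b : ℕ → ℝ → ℝ) (d N : ℕ) :
    ∫ ω, (∑ m ∈ range (d + 1),
        1 / qFact q (m + 1) * ∑ k ∈ range N, qItoTerm q t B b m k ω) ^ 2 ∂μ =
      ∑ k ∈ range N, (1 - q) * t * (q ^ k * ∫ ω, qIntegrand q B b d (q ^ k * t) ω ^ 2 ∂μ) := by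
  have hflat : ∀ ω, ∑ m ∈ range (d + 1),
      1 / qFact q (m + 1) * ∑ k ∈ range N, qItoTerm q t B b m k ω =
      ∑ p ∈ range (d + 1) ×ˢ range N, 1 / qFact q (p.1 + 1) * qItoTerm q t B b p.1 p.2 ω :=
    fun ω => by simp_rw [sum_product, mul_sum]
  have hint : ∀ m k n j, Integrable
      (fun ω => qItoTerm q t B b m k ω * qItoTerm q t B b n j ω) μ := fun m k n j =>
    ((hB.memLp_qItoTerm hq₀.le ht.le b m k).integrable le_top).mul_of_top_left
      (hB.memLp_qItoTerm hq₀.le ht.le b n j)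
  simp_rw [hflat]
  rw [integral_sq_sum_mul_of_orthogonal (range (d + 1) ×ˢ range N)
    (fun p => 1 / qFact q (p.1 + 1)) (fun p ω => qItoTerm q t B b p.1 p.2 ω)
    (fun p => b p.1 (q ^ p.2 * t) ^ 2 *
      (qFact q (p.1 + 1) * ((q ^ p.2 * t) ^ (p.1 + 1) - (q ^ (p.2 + 1) * t) ^ (p.1 + 1))))
    (fun p _ p' _ => hint _ _ _ _)
    (fun p _ p' _ => (hB.integral_qItoTerm_mul_qItoTerm hq₀ hq₁ ht b _ _ _ _).trans
      (by simp only [Prod.mk.eta])), sum_product_right]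
  refine sum_congr rfl fun k _ => ?_
  rw [hB.integral_qIntegrand_sq hq₀.le b d (by positivity), mul_sum, mul_sum]
  refine sum_congr rfl fun m _ => ?_
  have hF := (qFact_pos hq₀.le (m + 1)).ne'
  calc (1 / qFact q (m + 1)) ^ 2 * (b m (q ^ k * t) ^ 2 *
        (qFact q (m + 1) * ((q ^ k * t) ^ (m + 1) - (q ^ (k + 1) * t) ^ (m + 1))))
      = b m (q ^ k * t) ^ 2 *
          (((q ^ k * t) ^ (m + 1) - (q * (q ^ k * t)) ^ (m + 1)) / qFact q (m + 1)) := by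
        rw [pow_succ q k]
        field_simp
    _ = (1 - q) * t * (q ^ k * (b m (q ^ k * t) ^ 2 / qFact q m * (q ^ k * t) ^ m)) := by
        rw [sub_pow_succ_div_qFact_succ hq₀.le]
        ring

lemma tsum_integral_qIntegrand_sq (hB : IsQBrownian μ ℱ q B) (hq₀ : 0 < q) (ht : 0 < t)
    (b : ℕ → ℝ → ℝ) (d : ℕ)
    (hsum : Summable fun k => q ^ k * ∫ ω, qIntegrand q B b d (q ^ k * t) ω ^ 2 ∂μ) :
    ∑' k, q ^ k * ∫ ω, qIntegrand q B b d (q ^ k * t) ω ^ 2 ∂μ =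
      ∑ m ∈ range (d + 1),
        1 / qFact q m * ∑' k, q ^ k * b m (q ^ k * t) ^ 2 * (q ^ k * t) ^ m := by
  have hterm : ∀ k, q ^ k * ∫ ω, qIntegrand q B b d (q ^ k * t) ω ^ 2 ∂μ =
      ∑ m ∈ range (d + 1), 1 / qFact q m * (q ^ k * b m (q ^ k * t) ^ 2 * (q ^ k * t) ^ m) :=
    fun k => by
      rw [hB.integral_qIntegrand_sq hq₀.le b d (by positivity), mul_sum]
      exact sum_congr rfl fun m _ => by ring
  have hnonneg :
      ∀ m k, 0 ≤ 1 / qFact q m * (q ^ k * b m (q ^ k * t) ^ 2 * (q ^ k * t) ^ m) :=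
    fun m k => mul_nonneg (one_div_nonneg.mpr (qFact_pos hq₀.le m).le) (by positivity)
  simp_rw [hterm] at hsum ⊢
  rw [Summable.tsum_finsetSum fun m hm => Summable.of_nonneg_of_le (hnonneg m)
    (fun k => single_le_sum (fun m _ => hnonneg m k) hm) hsum]
  simp_rw [tsum_mul_left]

end IsQBrownian

theorem q_ito_isometry_general
    {Ω : Type*} [m0 : MeasurableSpace Ω] (μ : Measure Ω) [IsProbabilityMeasure μ]
    (ℱ : Filtration ℝ m0) (q t : ℝ) (hq0 : 0 < q) (hq1 : q < 1) (ht : 0 < t)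
    (B : ℝ → Ω → ℝ) (hadp : Adapted ℱ B)
    (hbdd : ∀ s : ℝ, 0 ≤ s → ∀ᵐ ω ∂μ, |B s ω| ≤ 2 * Real.sqrt s / Real.sqrt (1 - q))
    (hmart : ∀ (n : ℕ) (s u : ℝ), 0 ≤ s → s ≤ u →
      μ[fun ω => qH q n (B u ω) u | ℱ s] =ᵐ[μ] fun ω => qH q n (B s ω) s)
    (horth : ∀ s : ℝ, 0 < s → ∀ m n : ℕ,
      ∫ ω, qH q n (B s ω) s * qH q m (B s ω) s ∂μ =
        if m = n then qFact q n * s ^ n else 0)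
    (d : ℕ) (b : ℕ → ℝ → ℝ)
    (hb : ∀ m ≤ d, ∃ M : ℝ, ∀ s ∈ Set.Icc (0 : ℝ) t, |b m s| ≤ M) :
    ∃ J : ℕ → Ω → ℝ,
      (∀ m ≤ d,
        (∀ᵐ ω ∂μ, Tendsto
          (fun N : ℕ => ∑ k ∈ Finset.range N, b m (q ^ k * t) *
            (qH q (m + 1) (B (q ^ k * t) ω) (q ^ k * t) -
             qH q (m + 1) (B (q ^ (k + 1) * t) ω) (q ^ (k + 1) * t)))
          atTop (nhds (J m ω))) ∧
        Tendsto (fun N : ℕ => ∫ ω,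
            (∑ k ∈ Finset.range N, b m (q ^ k * t) *
              (qH q (m + 1) (B (q ^ k * t) ω) (q ^ k * t) -
               qH q (m + 1) (B (q ^ (k + 1) * t) ω) (q ^ (k + 1) * t)) - J m ω) ^ 2 ∂μ)
          atTop (nhds 0)) ∧
      (∫ ω, (∑ m ∈ Finset.range (d + 1), (1 / qFact q (m + 1)) * J m ω) ^ 2 ∂μ =
        (1 - q) * t * ∑' k : ℕ, q ^ k *
          ∫ ω, (∑ m ∈ Finset.range (d + 1),
            b m (q ^ k * t) / qFact q m * qH q m (B (q ^ k * t) ω) (q ^ k * t)) ^ 2 ∂μ) ∧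
      ((1 - q) * t * ∑' k : ℕ, q ^ k *
          ∫ ω, (∑ m ∈ Finset.range (d + 1),
            b m (q ^ k * t) / qFact q m * qH q m (B (q ^ k * t) ω) (q ^ k * t)) ^ 2 ∂μ =
        ∑ m ∈ Finset.range (d + 1), (1 / qFact q m) *
          ((1 - q) * t * ∑' k : ℕ, q ^ k * (b m (q ^ k * t)) ^ 2 * (q ^ k * t) ^ m)) := by
  have hB : IsQBrownian μ ℱ q B := ⟨hadp, hbdd, hmart, horth⟩
  have h1q : 0 < 1 - q := sub_pos.mpr hq1
  have hr₀ : 0 ≤ √q := Real.sqrt_nonneg q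
  have hr₁ : √q < 1 := (Real.sqrt_lt_sqrt hq0.le hq1).trans_eq Real.sqrt_one
  have hmeas := hB.measurable_qItoTerm (t := t) b
  choose! M hM using hb
  choose! C hC using fun m (hm : m ≤ d) => hB.exists_ae_abs_qItoTerm_le hq0.le hq1.le ht.le
    fun k => hM m hm _ ⟨by positivity, mul_le_of_le_one_left ht.le (pow_le_one₀ hq0.le hq1.le)⟩
  have hisometry : HasSum
      (fun k => (1 - q) * t * (q ^ k * ∫ ω, qIntegrand q B b d (q ^ k * t) ω ^ 2 ∂μ))
      (∫ ω, (∑ m ∈ range (d + 1),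
        1 / qFact q (m + 1) * ∑' k, qItoTerm q t B b m k ω) ^ 2 ∂μ) := by
    rw [hasSum_iff_tendsto_nat_of_nonneg fun k => by positivity]
    exact (tendsto_integral_sq_sum_mul_sum_range _ _ hmeas hr₀ hr₁ fun m hm =>
      hC m (mem_range_succ_iff.mp hm)).congr (hB.integral_sq_sum_qItoTerm hq0 hq1.le ht b d)
  refine ⟨fun m ω => ∑' k, qItoTerm q t B b m k ω, fun m hm =>
    ⟨ae_tendsto_sum_range_tsum hr₀ hr₁ (hC m hm),
      tendsto_integral_sq_sum_range_sub_tsum (hmeas m) hr₀ hr₁ (hC m hm)⟩, ?_, ?_⟩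
  · rw [← tsum_mul_left]
    exact hisometry.tsum_eq.symm
  · refine (congrArg ((1 - q) * t * ·) (hB.tsum_integral_qIntegrand_sq hq0 ht b d
      ((summable_mul_left_iff (mul_pos h1q ht).ne').mp hisometry.summable))).trans ?_
    rw [mul_sum]
    exact sum_congr rfl fun m _ => by ring

/-- q-analog of the Itô isometry. For a polynomial integrand
`f(x,s) = ∑_{m≤d} (b_m(s)/[m]_q!) h_m(x;s)` with coefficients bounded on `[0,t]`,
each Jackson series `J_m = ∑_k b_m(q^k t)(h_{m+1}(B_{q^k t};q^k t) − h_{m+1}(B_{q^{k+1}t};q^{k+1}t))`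
converges a.s. and in `L²`, and `I = ∑_{m≤d} J_m/[m+1]_q!` satisfies
`E[I²] = (1−q) t ∑_k q^k E[f(B_{q^k t},q^k t)²] = ∑_{m≤d} (1/[m]_q!) ∫_0^t b_m(s)² s^m d_q s`. -/
theorem q_ito_isometry
    {Ω : Type*} [m0 : MeasurableSpace Ω] (μ : Measure Ω) [IsProbabilityMeasure μ]
    (ℱ : Filtration ℝ m0) (q t : ℝ) (hq0 : 0 < q) (hq1 : q < 1) (ht : 0 < t)
    (B : ℝ → Ω → ℝ) (hadp : Adapted ℱ B) (hB0 : ∀ ω, B 0 ω = 0)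
    (hbdd : ∀ s : ℝ, 0 ≤ s → ∀ᵐ ω ∂μ, |B s ω| ≤ 2 * Real.sqrt s / Real.sqrt (1 - q))
    (hmart : ∀ (n : ℕ) (s u : ℝ), 0 ≤ s → s ≤ u →
      μ[fun ω => qH q n (B u ω) u | ℱ s] =ᵐ[μ] fun ω => qH q n (B s ω) s)
    (horth : ∀ s : ℝ, 0 < s → ∀ m n : ℕ,
      ∫ ω, qH q n (B s ω) s * qH q m (B s ω) s ∂μ =
        if m = n then qFact q n * s ^ n else 0)
    (d : ℕ) (b : ℕ → ℝ → ℝ)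
    (hb : ∀ m ≤ d, ∃ M : ℝ, ∀ s ∈ Set.Icc (0 : ℝ) t, |b m s| ≤ M) :
    ∃ J : ℕ → Ω → ℝ,
      (∀ m ≤ d,
        (∀ᵐ ω ∂μ, Tendsto
          (fun N : ℕ => ∑ k ∈ Finset.range N, b m (q ^ k * t) *
            (qH q (m + 1) (B (q ^ k * t) ω) (q ^ k * t) -
             qH q (m + 1) (B (q ^ (k + 1) * t) ω) (q ^ (k + 1) * t)))
          atTop (nhds (J m ω))) ∧
        Tendsto (fun N : ℕ => ∫ ω,
            (∑ k ∈ Finset.range N, b m (q ^ k * t) *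
              (qH q (m + 1) (B (q ^ k * t) ω) (q ^ k * t) -
               qH q (m + 1) (B (q ^ (k + 1) * t) ω) (q ^ (k + 1) * t)) - J m ω) ^ 2 ∂μ)
          atTop (nhds 0)) ∧
      (∫ ω, (∑ m ∈ Finset.range (d + 1), (1 / qFact q (m + 1)) * J m ω) ^ 2 ∂μ =
        (1 - q) * t * ∑' k : ℕ, q ^ k *
          ∫ ω, (∑ m ∈ Finset.range (d + 1),
            b m (q ^ k * t) / qFact q m * qH q m (B (q ^ k * t) ω) (q ^ k * t)) ^ 2 ∂μ) ∧
      ((1 - q) * t * ∑' k : ℕ, q ^ k *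
          ∫ ω, (∑ m ∈ Finset.range (d + 1),
            b m (q ^ k * t) / qFact q m * qH q m (B (q ^ k * t) ω) (q ^ k * t)) ^ 2 ∂μ =
        ∑ m ∈ Finset.range (d + 1), (1 / qFact q m) *
          ((1 - q) * t * ∑' k : ℕ, q ^ k * (b m (q ^ k * t)) ^ 2 * (q ^ k * t) ^ m)) :=
  q_ito_isometry_general (m0 := m0) μ ℱ q t hq0 hq1 ht B hadp hbdd hmart horth d b hb
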